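/- arXiv:2312.07672 — 2 statements merged into one kernel-verified Lean document; each statement's English description precedes it below -/
import Mathlib

section
/- Let A be a complex matrix with singular value decomposition A = Σᵢ ξᵢ |v_lⁱ⟩⟨v_rⁱ|, and let g(x) = Σ_{i=0}^{d} cᵢ xⁱ be a real polynomial with g(0) = 0 and |g(x)| ≤ 1 for all x ∈ [−1,1], such that |g(x) − 1/(2κx)| ≤ ε/(2κ) for all x ∈ [−1,1] with |x| ≥ 1/κ. If every nonzero singular value ξᵢ of A satisfies 1/κ ≤ ξᵢ ≤ 1, then ‖A⁺ − 2κ·g(A)‖ ≤ ε, where g(A) := Σᵢ g(ξᵢ)|v_lⁱ⟩⟨v_rⁱ| (for d odd) and A⁺ is the Moore–Penrose pseudoinverse, and ‖·‖ is the operator norm. -/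
open Matrix Polynomial

/-- The outer product `|u⟩⟨v|` as a matrix. -/
def outer {m n : Type*} (u : m → ℂ) (v : n → ℂ) : Matrix m n ℂ :=
  Matrix.vecMulVec u (star v)

/-- The `ℓ²`-operator (spectral) norm of a complex matrix. -/
noncomputable def opNorm {m n : Type*} [Fintype m] [Fintype n] [DecidableEq n]
    (A : Matrix m n ℂ) : ℝ :=
  ‖LinearMap.toContinuousLinearMap (Matrix.toEuclideanLin A)‖

/-!
Both `A⁺` and `g(A)` are diagonal in the same pair of orthonormal families, so
`A⁺ - 2κ g(A) = Σᵢ (ξᵢ⁻¹ - 2κ g(ξᵢ)) |v_rⁱ⟩⟨v_lⁱ|`, whose operator norm is at most the largest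
coefficient. For `ξᵢ ∈ [1/κ, 1]` the coefficient is `2κ (1/(2κξᵢ) - g(ξᵢ))`, of size at most `ε`
by the approximation hypothesis, and for `ξᵢ = 0` it vanishes because `g(0) = 0`.
-/

section InnerProductSpace

variable {𝕜 E F ι : Type*} [RCLike 𝕜] [NormedAddCommGroup E] [InnerProductSpace 𝕜 E]
  [NormedAddCommGroup F] [InnerProductSpace 𝕜 F]

open scoped InnerProductSpace

theorem Orthonormal.norm_sum_smul_inner_le {u : ι → E} {v : ι → F} (hu : Orthonormal 𝕜 u)
    (hv : Orthonormal 𝕜 v) (s : Finset ι) {c : ι → 𝕜} {C : ℝ} (hC : 0 ≤ C)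
    (hc : ∀ i, ‖c i‖ ≤ C) (x : E) :
    ‖∑ i ∈ s, (c i * ⟪u i, x⟫_𝕜) • v i‖ ≤ C * ‖x‖ := by
  have hsq : ‖∑ i ∈ s, (c i * ⟪u i, x⟫_𝕜) • v i‖ ^ 2 ≤ (C * ‖x‖) ^ 2 :=
    calc ‖∑ i ∈ s, (c i * ⟪u i, x⟫_𝕜) • v i‖ ^ 2
        = ∑ i ∈ s, ‖c i * ⟪u i, x⟫_𝕜‖ ^ 2 := by
          simpa using hv.orthogonalFamily.norm_sum (fun i => c i * ⟪u i, x⟫_𝕜) s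
      _ ≤ ∑ i ∈ s, C ^ 2 * ‖⟪u i, x⟫_𝕜‖ ^ 2 := Finset.sum_le_sum fun i _ => by
          rw [norm_mul, mul_pow]
          gcongr
          exact hc i
      _ = C ^ 2 * ∑ i ∈ s, ‖⟪u i, x⟫_𝕜‖ ^ 2 := (Finset.mul_sum _ _ _).symm
      _ ≤ C ^ 2 * ‖x‖ ^ 2 := by gcongr; exact hu.sum_inner_products_le x
      _ = (C * ‖x‖) ^ 2 := by ring
  exact (pow_le_pow_iff_left₀ (norm_nonneg _) (by positivity) two_ne_zero).1 hsq

end InnerProductSpace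

theorem orthonormal_toLp_iff {𝕜 ι n : Type*} [RCLike 𝕜] [Fintype n] [DecidableEq ι]
    (v : ι → n → 𝕜) :
    Orthonormal 𝕜 (fun i => WithLp.toLp 2 (v i) : ι → EuclideanSpace 𝕜 n) ↔
      ∀ i j, star (v i) ⬝ᵥ v j = if i = j then (1 : 𝕜) else 0 := by
  simp only [orthonormal_iff_ite, EuclideanSpace.inner_toLp_toLp, dotProduct_comm (v _)]

theorem outer_mulVec {m n : Type*} [Fintype n] (u : m → ℂ) (v w : n → ℂ) :
    outer u v *ᵥ w = (star v ⬝ᵥ w) • u := by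
  simp [outer, vecMulVec_mulVec]

theorem toEuclideanLin_sum_smul_outer_apply {ι m n : Type*} [Fintype n] [DecidableEq n]
    (s : Finset ι) (c : ι → ℂ) (u : ι → m → ℂ) (v : ι → n → ℂ) (x : EuclideanSpace ℂ n) :
    toEuclideanLin (∑ i ∈ s, c i • outer (u i) (v i)) x =
      ∑ i ∈ s, (c i * inner ℂ (WithLp.toLp 2 (v i)) x) • WithLp.toLp 2 (u i) := by
  simp only [toLpLin_apply, sum_mulVec, smul_mulVec, outer_mulVec, smul_smul,
    WithLp.toLp_sum, WithLp.toLp_smul, EuclideanSpace.inner_eq_star_dotProduct,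
    dotProduct_comm (star _)]

theorem opNorm_sum_smul_outer_le {ι m n : Type*} [Fintype m] [Fintype n] [DecidableEq n]
    {u : ι → m → ℂ} {v : ι → n → ℂ}
    (hu : Orthonormal ℂ (fun i => WithLp.toLp 2 (u i) : ι → EuclideanSpace ℂ m))
    (hv : Orthonormal ℂ (fun i => WithLp.toLp 2 (v i) : ι → EuclideanSpace ℂ n))
    (s : Finset ι) {c : ι → ℂ} {C : ℝ} (hC : 0 ≤ C) (hc : ∀ i, ‖c i‖ ≤ C) :
    opNorm (∑ i ∈ s, c i • outer (u i) (v i)) ≤ C :=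
  ContinuousLinearMap.opNorm_le_bound _ hC fun x => by
    rw [LinearMap.coe_toContinuousLinearMap', toEuclideanLin_sum_smul_outer_apply]
    exact hv.norm_sum_smul_inner_le hu s hC hc x

theorem abs_inv_sub_le_of_abs_sub_le {x y κ ε : ℝ} (hκ : 0 < κ)
    (h : |y - 1 / (2 * κ * x)| ≤ ε / (2 * κ)) : |x⁻¹ - 2 * κ * y| ≤ ε := by
  have hfactor : x⁻¹ - 2 * κ * y = -(2 * κ) * (y - 1 / (2 * κ * x)) := by
    field_simp
    ring
  rw [hfactor, abs_mul, abs_neg, abs_of_pos (by positivity)]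
  calc 2 * κ * |y - 1 / (2 * κ * x)| ≤ 2 * κ * (ε / (2 * κ)) := by gcongr
    _ = ε := by field_simp

theorem stmt_1_general (ι m' m : Type*) [Fintype ι] [DecidableEq ι]
    [Fintype m'] [Fintype m] [DecidableEq m']
    (ξ : ι → ℝ) (vl : ι → m' → ℂ) (vr : ι → m → ℂ)
    (hvl : ∀ i j, star (vl i) ⬝ᵥ vl j = if i = j then (1 : ℂ) else 0)
    (hvr : ∀ i j, star (vr i) ⬝ᵥ vr j = if i = j then (1 : ℂ) else 0)
    (κ ε : ℝ) (hκ : 1 < κ) (hε : 0 < ε)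
    (g : Polynomial ℝ) (hg0 : g.eval 0 = 0)
    (hgapprox : ∀ x ∈ Set.Icc (-1 : ℝ) 1, 1 / κ ≤ |x| →
      |g.eval x - 1 / (2 * κ * x)| ≤ ε / (2 * κ))
    (hξ : ∀ i, ξ i ≠ 0 → 1 / κ ≤ ξ i ∧ ξ i ≤ 1)
    (Apinv gA : Matrix m m' ℂ)
    (hApinv : Apinv = ∑ i, (if ξ i = 0 then 0 else ((ξ i)⁻¹ : ℂ)) • outer (vr i) (vl i))
    (hgA : gA = ∑ i, ((g.eval (ξ i) : ℝ) : ℂ) • outer (vr i) (vl i)) :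
    opNorm (Apinv - (2 * κ : ℂ) • gA) ≤ ε := by
  -- Since `0⁻¹ = 0`, the pseudoinverse coefficient is `ξᵢ⁻¹` also at `ξᵢ = 0`.
  have hcoeff : ∀ i, (if ξ i = 0 then 0 else ((ξ i)⁻¹ : ℂ)) -
      (2 * κ : ℂ) * ((g.eval (ξ i) : ℝ) : ℂ) = (((ξ i)⁻¹ - 2 * κ * g.eval (ξ i) : ℝ) : ℂ) :=
    fun i => by split_ifs with h <;> simp [h]
  have hdiff : Apinv - (2 * κ : ℂ) • gA =
      ∑ i, (((ξ i)⁻¹ - 2 * κ * g.eval (ξ i) : ℝ) : ℂ) • outer (vr i) (vl i) := by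
    simp only [hApinv, hgA, Finset.smul_sum, smul_smul, ← Finset.sum_sub_distrib, ← sub_smul,
      hcoeff]
  rw [hdiff]
  refine opNorm_sum_smul_outer_le ((orthonormal_toLp_iff vr).2 hvr)
    ((orthonormal_toLp_iff vl).2 hvl) _ hε.le fun i => ?_
  rw [Complex.norm_real, Real.norm_eq_abs]
  by_cases h0 : ξ i = 0
  · simp [h0, hg0, hε.le]
  obtain ⟨hlow, hup⟩ := hξ i h0
  have hpos : 0 < ξ i := lt_of_lt_of_le (by positivity) hlow
  refine abs_inv_sub_le_of_abs_sub_le (by positivity) (hgapprox _ ⟨by linarith, hup⟩ ?_)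
  rwa [abs_of_pos hpos]

/-- If `A = Σᵢ ξᵢ |v_lⁱ⟩⟨v_rⁱ|` is an SVD, and `g` is a real polynomial with
`g(0) = 0`, `|g| ≤ 1` on `[-1,1]`, `|g(x) − 1/(2κx)| ≤ ε/(2κ)` for `1/κ ≤ |x| ≤ 1`, and
every nonzero singular value lies in `[1/κ, 1]`, then `‖A⁺ − 2κ·g(A)‖ ≤ ε`, where the
singular value transformation `g(A)` is compared entrywise on singular values with
`1/(2κξᵢ)` and `A⁺` is the Moore–Penrose pseudoinverse. -/
theorem stmt_1 (ι m' m : Type*) [Fintype ι] [DecidableEq ι]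
    [Fintype m'] [Fintype m] [DecidableEq m'] [DecidableEq m]
    (ξ : ι → ℝ) (vl : ι → m' → ℂ) (vr : ι → m → ℂ)
    (hvl : ∀ i j, star (vl i) ⬝ᵥ vl j = if i = j then (1 : ℂ) else 0)
    (hvr : ∀ i j, star (vr i) ⬝ᵥ vr j = if i = j then (1 : ℂ) else 0)
    (hξnonneg : ∀ i, 0 ≤ ξ i)
    (A : Matrix m' m ℂ) (hA : A = ∑ i, (ξ i : ℂ) • outer (vl i) (vr i))
    (κ ε : ℝ) (hκ : 1 < κ) (hε : 0 < ε) (hε' : ε < 1 / 2)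
    (g : Polynomial ℝ) (hg0 : g.eval 0 = 0)
    (hgbound : ∀ x ∈ Set.Icc (-1 : ℝ) 1, |g.eval x| ≤ 1)
    (hgapprox : ∀ x ∈ Set.Icc (-1 : ℝ) 1, 1 / κ ≤ |x| →
      |g.eval x - 1 / (2 * κ * x)| ≤ ε / (2 * κ))
    (hξ : ∀ i, ξ i ≠ 0 → 1 / κ ≤ ξ i ∧ ξ i ≤ 1)
    (Apinv gA : Matrix m m' ℂ)
    (hApinv : Apinv = ∑ i, (if ξ i = 0 then 0 else ((ξ i)⁻¹ : ℂ)) • outer (vr i) (vl i))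
    (hgA : gA = ∑ i, ((g.eval (ξ i) : ℝ) : ℂ) • outer (vr i) (vl i)) :
    opNorm (Apinv - (2 * κ : ℂ) • gA) ≤ ε :=
  stmt_1_general ι m' m ξ vl vr hvl hvr κ ε hκ hε g hg0 hgapprox hξ Apinv gA hApinv hgA
end

section
/- Let A₀,…,A_{m−1} be unitaries, c₀,…,c_{m−1} ∈ ℝ₊, A = Σᵢ cᵢAᵢ, and ‖c‖₁ = Σᵢ cᵢ. With the LCU construction, upon applying (G†⊗I)·W·(G⊗I) to |0⟩|ψ⟩ for a normalized |ψ⟩ and post-selecting the ancilla on |0⟩, the success probability equals ‖A|ψ⟩‖² / ‖c‖₁². -/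
open Matrix Kronecker

/-- Success probability of the LCU construction.  Applying
`(G† ⊗ I) W (G ⊗ I)` to `|0⟩|ψ⟩` and post-selecting the ancilla on `|0⟩` succeeds with
probability `‖A|ψ⟩‖² / ‖c‖₁²`, where `A = Σᵢ cᵢ Aᵢ` and `‖c‖₁ = Σᵢ cᵢ`. -/
theorem stmt_6 (m : ℕ) (hm : 0 < m) (n : Type*) [Fintype n] [DecidableEq n]
    (A : Fin m → Matrix n n ℂ) (hA : ∀ i, A i ∈ Matrix.unitaryGroup n ℂ)
    (c : Fin m → ℝ) (hc : ∀ i, 0 < c i) (β : ℝ) (hβ : β = ∑ i, c i)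
    (G : Matrix (Fin m) (Fin m) ℂ) (hG : G ∈ Matrix.unitaryGroup (Fin m) ℂ)
    (i0 : Fin m) (hi0 : i0 = ⟨0, hm⟩)
    (hGact : G.mulVec (fun j => if j = i0 then 1 else 0)
      = fun i => ((Real.sqrt (c i) / Real.sqrt β : ℝ) : ℂ))
    (W : Matrix (Fin m × n) (Fin m × n) ℂ)
    (hW : W = Matrix.of fun p q => if p.1 = q.1 then A p.1 p.2 q.2 else 0)
    (M : Matrix (Fin m × n) (Fin m × n) ℂ)
    (hM : M = (Gᴴ ⊗ₖ (1 : Matrix n n ℂ)) * W * (G ⊗ₖ (1 : Matrix n n ℂ)))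
    (ψ : n → ℂ) (hψ : ∑ a, Complex.normSq (ψ a) = 1) :
    ∑ a : n, Complex.normSq
        (M.mulVec (fun p => (if p.1 = i0 then (1 : ℂ) else 0) * ψ p.2) (i0, a))
      = (∑ a : n, Complex.normSq ((∑ i : Fin m, (c i : ℂ) • A i).mulVec ψ a)) / β ^ 2 := by
  have hβpos : 0 < β := hβ ▸ Finset.sum_pos (fun i _ => hc i) ⟨i0, Finset.mem_univ _⟩
  have hGcol : ∀ i, G i i0 = ((Real.sqrt (c i) / Real.sqrt β : ℝ) : ℂ) := by
    intro i
    have := congrFun hGact i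
    simpa [Matrix.mulVec, dotProduct] using this
  set v : Fin m × n → ℂ := fun p => (if p.1 = i0 then (1 : ℂ) else 0) * ψ p.2 with hv
  have h1 : (G ⊗ₖ (1 : Matrix n n ℂ)).mulVec v
      = fun p => ((Real.sqrt (c p.1) / Real.sqrt β : ℝ) : ℂ) * ψ p.2 := by
    funext p
    obtain ⟨i, a⟩ := p
    simp [hv, Matrix.mulVec, dotProduct, Fintype.sum_prod_type, Matrix.one_apply,
      ite_mul, mul_ite, mul_comm, hGcol i]
  have h2 : W.mulVec ((G ⊗ₖ (1 : Matrix n n ℂ)).mulVec v)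
      = fun p => ((Real.sqrt (c p.1) / Real.sqrt β : ℝ) : ℂ) * (A p.1).mulVec ψ p.2 := by
    funext p
    obtain ⟨i, a⟩ := p
    rw [h1]
    simp [hW, Matrix.mulVec, dotProduct, Fintype.sum_prod_type, ite_mul,
      Finset.mul_sum, mul_assoc, mul_left_comm]
  have key : ∀ a : n, M.mulVec v (i0, a)
      = ((β : ℂ))⁻¹ * ((∑ i : Fin m, (c i : ℂ) • A i).mulVec ψ a) := by
    intro a
    rw [hM, ← Matrix.mulVec_mulVec, ← Matrix.mulVec_mulVec, h2]
    have : ∀ j : Fin m, (starRingEnd ℂ) (G j i0) * (((Real.sqrt (c j) / Real.sqrt β : ℝ) : ℂ) * (A j).mulVec ψ a)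
        = ((β : ℂ))⁻¹ * ((c j : ℂ) * (A j).mulVec ψ a) := by
      intro j
      rw [hGcol j]
      have hcj : Real.sqrt (c j) * Real.sqrt (c j) = c j :=
        Real.mul_self_sqrt (hc j).le
      have hbb : Real.sqrt β * Real.sqrt β = β := Real.mul_self_sqrt hβpos.le
      have : ((Real.sqrt (c j) / Real.sqrt β : ℝ) : ℂ) * ((Real.sqrt (c j) / Real.sqrt β : ℝ) : ℂ)
          = ((β : ℂ))⁻¹ * (c j : ℂ) := by
        push_cast
        rw [div_mul_div_comm, ← Complex.ofReal_mul, hcj, ← Complex.ofReal_mul, hbb,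
          div_eq_inv_mul]
      rw [Complex.conj_ofReal, ← mul_assoc, this, mul_assoc]
    calc (kroneckerMap (· * ·) Gᴴ (1 : Matrix n n ℂ)).mulVec
          (fun p => ((Real.sqrt (c p.1) / Real.sqrt β : ℝ) : ℂ) * (A p.1).mulVec ψ p.2) (i0, a)
        = ∑ j : Fin m, (starRingEnd ℂ) (G j i0)
            * (((Real.sqrt (c j) / Real.sqrt β : ℝ) : ℂ) * (A j).mulVec ψ a) := by
          simp [Matrix.mulVec, dotProduct, Fintype.sum_prod_type, Matrix.one_apply,
            Matrix.conjTranspose_apply, ite_mul, mul_ite]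
      _ = ∑ j : Fin m, ((β : ℂ))⁻¹ * ((c j : ℂ) * (A j).mulVec ψ a) := by
          exact Finset.sum_congr rfl fun j _ => this j
      _ = ((β : ℂ))⁻¹ * ((∑ i : Fin m, (c i : ℂ) • A i).mulVec ψ a) := by
          rw [← Finset.mul_sum]
          congr 1
          simp only [Matrix.mulVec, dotProduct, Matrix.sum_apply, Matrix.smul_apply,
            smul_eq_mul, Finset.sum_mul, Finset.mul_sum, mul_assoc]
          rw [Finset.sum_comm]
  simp only [key, Complex.normSq_mul, map_inv₀, Complex.normSq_ofReal, ← Finset.mul_sum]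
  rw [div_eq_inv_mul]
  ring_nf
end
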